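/- arXiv:2112.02705 — 5 statements merged into one kernel-verified Lean document; each statement's English description precedes it below -/
import Mathlib

section
/- Let X_S' ⊆ X be any under-approximation of the stable part of the feature space, i.e., X_S' ⊆ {x ∈ X : g is stable on x}. Then: (i) for every x ∈ X, if g is robust on x and N(x) ⊆ X_S', then g is resilient on x; and consequently (ii) for every nonempty finite test set D, the estimate R̂(g,D) = |{x ∈ D : N(x) ⊆ X_S' ∧ g is robust on x}| / |D| satisfies R̂(g,D) ≤ R(g,D). -/
open Classical

/-- The classifier `g` is stable on `x` w.r.t. attacker `A`. -/
def Stable {d : ℕ} {Y : Type*} (g : (Fin d → ℝ) → Y)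
    (A : (Fin d → ℝ) → Set (Fin d → ℝ)) (x : Fin d → ℝ) : Prop :=
  ∀ z ∈ A x, g z = g x

/-- The classifier `g` is robust on `x` w.r.t. target `f` and attacker `A`. -/
def Robust {d : ℕ} {Y : Type*} (g f : (Fin d → ℝ) → Y)
    (A : (Fin d → ℝ) → Set (Fin d → ℝ)) (x : Fin d → ℝ) : Prop :=
  g x = f x ∧ Stable g A x

/-- The classifier `g` is resilient on `x` w.r.t. target `f`, attacker `A` and
neighborhood function `N`. -/
def Resilient {d : ℕ} {Y : Type*} (g f : (Fin d → ℝ) → Y)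
    (A N : (Fin d → ℝ) → Set (Fin d → ℝ)) (x : Fin d → ℝ) : Prop :=
  Robust g f A x ∧ ∀ z ∈ N x, Stable g A z

/-- Resilience of `g` w.r.t. target `f`, attacker `A` and neighborhood `N` on test set `D`. -/
noncomputable def resilience {d : ℕ} {Y : Type*} (g f : (Fin d → ℝ) → Y)
    (A N : (Fin d → ℝ) → Set (Fin d → ℝ)) (D : Finset (Fin d → ℝ)) : ℚ :=
  ((D.filter (fun x => Resilient g f A N x)).card : ℚ) / (D.card : ℚ)

/-- The resilience estimate `R̂` computed from an under-approximation `XS'`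
of the stable part of the feature space. -/
noncomputable def resilienceEstimate {d : ℕ} {Y : Type*} (g f : (Fin d → ℝ) → Y)
    (A N : (Fin d → ℝ) → Set (Fin d → ℝ)) (XS' : Set (Fin d → ℝ))
    (D : Finset (Fin d → ℝ)) : ℚ :=
  ((D.filter (fun x => N x ⊆ XS' ∧ Robust g f A x)).card : ℚ) / (D.card : ℚ)

theorem Finset.card_filter_div_card_le_of_imp {α K : Type*} [Semifield K] [LinearOrder K]
    [IsStrictOrderedRing K] (s : Finset α) {p q : α → Prop} [DecidablePred p] [DecidablePred q]
    (h : ∀ x ∈ s, p x → q x) :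
    ((s.filter p).card : K) / s.card ≤ ((s.filter q).card : K) / s.card :=
  div_le_div_of_nonneg_right (mod_cast Finset.card_le_card (s.monotone_filter_right h))
    s.card.cast_nonneg

theorem Resilient.of_robust {d : ℕ} {Y : Type*} {g f : (Fin d → ℝ) → Y}
    {A N : (Fin d → ℝ) → Set (Fin d → ℝ)} {x : Fin d → ℝ} (hx : Robust g f A x)
    (hN : N x ⊆ {z | Stable g A z}) : Resilient g f A N x :=
  ⟨hx, fun _ hz => hN hz⟩

theorem resilienceEstimate_le_resilience_general {d : ℕ} {Y : Type*}
    (g f : (Fin d → ℝ) → Y) (A N : (Fin d → ℝ) → Set (Fin d → ℝ))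
    (XS' : Set (Fin d → ℝ)) (hXS' : XS' ⊆ {x | Stable g A x}) :
    (∀ x : Fin d → ℝ, Robust g f A x → N x ⊆ XS' → Resilient g f A N x) ∧
    ∀ D : Finset (Fin d → ℝ), D.Nonempty →
      resilienceEstimate g f A N XS' D ≤ resilience g f A N D := by
  have resilient_of_robust (x : Fin d → ℝ) (hx : Robust g f A x) (hN : N x ⊆ XS') :
      Resilient g f A N x :=
    Resilient.of_robust hx (hN.trans hXS')
  refine ⟨resilient_of_robust, fun D _ => ?_⟩
  exact D.card_filter_div_card_le_of_imp fun x _ hx => resilient_of_robust x hx.2 hx.1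

/-- If `XS'` under-approximates the stable part of the feature space, then (i) every
robust instance whose neighborhood is included in `XS'` is resilient, and (ii) the
resilience estimate `R̂` is a lower bound to resilience on every nonempty finite test set. -/
theorem resilienceEstimate_le_resilience {d : ℕ} {Y : Type*} [Fintype Y]
    (g f : (Fin d → ℝ) → Y) (A N : (Fin d → ℝ) → Set (Fin d → ℝ))
    (XS' : Set (Fin d → ℝ)) (hXS' : XS' ⊆ {x | Stable g A x}) :
    (∀ x : Fin d → ℝ, Robust g f A x → N x ⊆ XS' → Resilient g f A N x) ∧
    ∀ D : Finset (Fin d → ℝ), D.Nonempty →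
      resilienceEstimate g f A N XS' D ≤ resilience g f A N D :=
  resilienceEstimate_le_resilience_general g f A N XS' hXS'
end

section
/- Let T = {t_1,…,t_n} be an ensemble of decision trees whose majority-voting prediction is T(x) = y if strictly more than n/2 trees satisfy t_i(x) = y (and a fixed default label otherwise), and whose prediction over a hyper-rectangle H is T(H) = {y} if |{i : t_i(H) = {y}}| > n/2 and T(H) = Y otherwise. Assuming each per-tree prediction over hyper-rectangles is sound, i.e., {y : ∃ x ∈ H, t_i(x) = y} ⊆ t_i(H) for all i and H, the ensemble prediction over hyper-rectangles is sound: {y ∈ Y : ∃ x ∈ H, T(x) = y} ⊆ T(H). -/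
open Classical

/-- Binary decision trees over `ℝ^d` with labels in `Y`. -/
inductive DTree (d : ℕ) (Y : Type*) where
  | leaf (y : Y)
  | node (f : Fin d) (v : ℝ) (l r : DTree d Y)

/-- Prediction of a decision tree on an instance. -/
noncomputable def DTree.eval {d : ℕ} {Y : Type*} : DTree d Y → (Fin d → ℝ) → Y
  | .leaf y, _ => y
  | .node f v l r, x => if x f ≤ v then l.eval x else r.eval x

/-- The set of instances of a hyper-rectangle `H = ⟨I_1,…,I_d⟩` (componentwise membership). -/
def box {d : ℕ} (H : Fin d → Set ℝ) : Set (Fin d → ℝ) :=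
  {x | ∀ i, x i ∈ H i}

/-- The recursively defined set of predictions of a decision tree over a hyper-rectangle. -/
noncomputable def DTree.evalBox {d : ℕ} {Y : Type*} : DTree d Y → (Fin d → Set ℝ) → Set Y
  | .leaf y, _ => {y}
  | .node f v l r, H =>
      if H f ∩ Set.Ioi v = ∅ then l.evalBox H
      else if H f ∩ Set.Iic v = ∅ then r.evalBox H
      else l.evalBox H ∪ r.evalBox H

/-- Majority-voting ensemble prediction on an instance: `y` if strictly more than `n/2`
trees predict `y`, a fixed default label `y0` otherwise. -/
noncomputable def ensembleEval {d n : ℕ} {Y : Type*} (T : Fin n → DTree d Y) (y0 : Y)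
    (x : Fin d → ℝ) : Y :=
  if h : ∃ y : Y, 2 * (Finset.univ.filter (fun i => (T i).eval x = y)).card > n then
    h.choose
  else y0

/-- Majority-voting ensemble prediction over a hyper-rectangle: `{y}` if strictly more
than `n/2` trees have `t_i(H) = {y}`, and the whole label set `Y` otherwise. -/
noncomputable def ensembleEvalBox {d n : ℕ} {Y : Type*} (T : Fin n → DTree d Y)
    (H : Fin d → Set ℝ) : Set Y :=
  if h : ∃ y : Y, 2 * (Finset.univ.filter (fun i => (T i).evalBox H = {y})).card > n then
    {h.choose}
  else Set.univ

theorem exists_and_of_card_lt_two_mul_card_filter {ι : Type*} [Fintype ι] {P Q : ι → Prop}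
    [DecidablePred P] [DecidablePred Q]
    (hP : Fintype.card ι < 2 * (Finset.univ.filter P).card)
    (hQ : Fintype.card ι < 2 * (Finset.univ.filter Q).card) :
    ∃ i, P i ∧ Q i := by
  obtain ⟨i, hi⟩ := Finset.inter_nonempty_of_card_lt_card_add_card
    (Finset.subset_univ (Finset.univ.filter P)) (Finset.subset_univ (Finset.univ.filter Q))
    (by rw [Finset.card_univ]; omega)
  simp only [Finset.mem_inter, Finset.mem_filter, Finset.mem_univ, true_and] at hi
  exact ⟨i, hi⟩

theorem ensembleEval_eq_of_majority {d n : ℕ} {Y : Type*} (T : Fin n → DTree d Y) (y0 : Y)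
    {x : Fin d → ℝ} {y : Y}
    (hy : 2 * (Finset.univ.filter (fun i => (T i).eval x = y)).card > n) :
    ensembleEval T y0 x = y := by
  have hex : ∃ y : Y, 2 * (Finset.univ.filter (fun i => (T i).eval x = y)).card > n := ⟨y, hy⟩
  rw [ensembleEval, dif_pos hex]
  -- two strict majorities share a tree, so the chosen majority label is `y`
  obtain ⟨i, hi, hi'⟩ := exists_and_of_card_lt_two_mul_card_filter
    (by rw [Fintype.card_fin]; exact hex.choose_spec) (by rw [Fintype.card_fin]; exact hy)
  exact hi.symm.trans hi'

theorem DTree.eval_eq_of_evalBox_eq_singleton {d : ℕ} {Y : Type*} {t : DTree d Y}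
    {H : Fin d → Set ℝ} (hsound : {y : Y | ∃ x ∈ box H, t.eval x = y} ⊆ t.evalBox H)
    {x : Fin d → ℝ} (hx : x ∈ box H) {y : Y} (ht : t.evalBox H = {y}) :
    t.eval x = y := by
  simpa only [ht, Set.mem_singleton_iff] using hsound ⟨x, hx, rfl⟩

theorem ensembleEvalBox_sound_general {d n : ℕ} {Y : Type*}
    (T : Fin n → DTree d Y) (y0 : Y)
    (hsound : ∀ (i : Fin n) (H : Fin d → Set ℝ),
      {y : Y | ∃ x ∈ box H, (T i).eval x = y} ⊆ (T i).evalBox H)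
    (H : Fin d → Set ℝ) :
    {y : Y | ∃ x ∈ box H, ensembleEval T y0 x = y} ⊆ ensembleEvalBox T H := by
  rintro _ ⟨x, hx, rfl⟩
  rw [ensembleEvalBox]
  split_ifs with hbox
  · -- every tree voting for the box label on `H` predicts it at `x`, so it wins the vote at `x`
    have hvote : (Finset.univ.filter (fun i => (T i).evalBox H = {hbox.choose})).card ≤
        (Finset.univ.filter (fun i => (T i).eval x = hbox.choose)).card :=
      Finset.card_le_card <| Finset.monotone_filter_right _ fun i _ =>
        DTree.eval_eq_of_evalBox_eq_singleton (hsound i H) hx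
    rw [ensembleEval_eq_of_majority T y0 (y := hbox.choose)
      (hbox.choose_spec.trans_le (by omega))]
    rfl
  · trivial

/-- Soundness of the ensemble prediction over hyper-rectangles: assuming each per-tree
prediction over hyper-rectangles is sound, the set `T(H)` over-approximates the set of
ensemble predictions reachable from instances of `H`. -/
theorem ensembleEvalBox_sound {d n : ℕ} {Y : Type*} [Fintype Y]
    (T : Fin n → DTree d Y) (y0 : Y)
    (hsound : ∀ (i : Fin n) (H : Fin d → Set ℝ),
      {y : Y | ∃ x ∈ box H, (T i).eval x = y} ⊆ (T i).evalBox H)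
    (H : Fin d → Set ℝ) :
    {y : Y | ∃ x ∈ box H, ensembleEval T y0 x = y} ⊆ ensembleEvalBox T H :=
  ensembleEvalBox_sound_general T y0 hsound H
end

section
/- Soundness of Tree Annotation (Lemma 1): for every decision tree t over ℝ^d and every set of symbolic attacks S, if the root of t is well-annotated by S, then the call Annotate(t, S) returns a well-annotated decision tree, i.e., every node of the resulting tree is well-annotated by the set of symbolic attacks stored in its sym attribute. -/
open Classical

/-- Annotated decision trees: each node carries a `sym` attribute,
i.e., a set of symbolic attacks. -/
inductive ATree (d : ℕ) (Y : Type*) (σ : Type*) where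
  | leaf (y : Y) (sym : σ)
  | node (f : Fin d) (v : ℝ) (sym : σ) (l r : ATree d Y σ)

/-- A symbolic attack: a pre-image hyper-rectangle, a post-image hyper-rectangle
(each represented as a `d`-vector of sets of reals, the intervals) and a cost. -/
structure SymAtk (d : ℕ) where
  pre : Fin d → Set ℝ
  post : Fin d → Set ℝ
  cost : ℕ

/-- The set of adversarial manipulations of `x` in the cost/budget threat model with
per-feature costs `c`, per-feature perturbation intervals `Iatk` and budget `b`. -/
def Adv {d : ℕ} (c : Fin d → ℕ) (Iatk : Fin d → Set ℝ) (b : ℕ)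
    (x : Fin d → ℝ) : Set (Fin d → ℝ) :=
  {z | ∃ F : Finset (Fin d),
    (∀ f ∈ F, ∃ δ ∈ Iatk f, z f = x f + δ) ∧
    (∀ f ∉ F, z f = x f) ∧
    (∑ f ∈ F, c f) ≤ b}

/-- `RefineLeft s f v`: refinement of the symbolic attack `s` for the left sub-tree of a
node testing feature `f` against threshold `v`, with attack intervals `[δl f, δr f]`,
costs `c` and budget `b`. -/
noncomputable def RefineLeft {d : ℕ} (c : Fin d → ℕ) (δl δr : Fin d → ℝ) (b : ℕ)
    (s : SymAtk d) (f : Fin d) (v : ℝ) : Set (SymAtk d) :=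
  (if s.post f ∩ Set.Iic v ≠ ∅ then
    {⟨Function.update s.pre f
        (if s.pre f = s.post f then s.pre f ∩ Set.Iic v
         else s.pre f ∩ Set.Iic (v - min 0 (δl f))),
      Function.update s.post f (s.post f ∩ Set.Iic v),
      s.cost⟩}
   else ∅)
  ∪
  (if s.pre f = s.post f ∧ δl f < 0 ∧ s.pre f ∩ Set.Ioc v (v - δl f) ≠ ∅ ∧
      s.cost + c f ≤ b then
    {⟨Function.update s.pre f (s.pre f ∩ Set.Ioc v (v - δl f)),
      Function.update s.post f (s.post f ∩ Set.Ioc (v + δl f) v),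
      s.cost + c f⟩}
   else ∅)

/-- `RefineRight s f v`: refinement of the symbolic attack `s` for the right sub-tree. -/
noncomputable def RefineRight {d : ℕ} (c : Fin d → ℕ) (δl δr : Fin d → ℝ) (b : ℕ)
    (s : SymAtk d) (f : Fin d) (v : ℝ) : Set (SymAtk d) :=
  (if s.post f ∩ Set.Ioi v ≠ ∅ then
    {⟨Function.update s.pre f
        (if s.pre f = s.post f then s.pre f ∩ Set.Ioi v
         else s.pre f ∩ Set.Ioi (v - max 0 (δr f))),
      Function.update s.post f (s.post f ∩ Set.Ioi v),
      s.cost⟩}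
   else ∅)
  ∪
  (if s.pre f = s.post f ∧ δr f > 0 ∧ s.pre f ∩ Set.Ioc (v - δr f) v ≠ ∅ ∧
      s.cost + c f ≤ b then
    {⟨Function.update s.pre f (s.pre f ∩ Set.Ioc (v - δr f) v),
      Function.update s.post f (s.post f ∩ Set.Ioc v (v + δr f)),
      s.cost + c f⟩}
   else ∅)

/-- `Annotate t S` stores `S` at the root of `t` and recursively annotates the left and
right sub-trees with the refinements of the symbolic attacks in `S`. -/
noncomputable def Annotate {d : ℕ} {Y : Type*} (c : Fin d → ℕ) (δl δr : Fin d → ℝ)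
    (b : ℕ) : DTree d Y → Set (SymAtk d) → ATree d Y (Set (SymAtk d))
  | .leaf y, S => .leaf y S
  | .node f v l r, S =>
      .node f v S
        (Annotate c δl δr b l (⋃ s ∈ S, RefineLeft c δl δr b s f v))
        (Annotate c δl δr b r (⋃ s ∈ S, RefineRight c δl δr b s f v))

/-- `ReachesD t z p`: the node of `t` identified by the root-path `p`
(`false` = left child, `true` = right child) is traversed in the prediction `t(z)`. -/
def ReachesD {d : ℕ} {Y : Type*} : DTree d Y → (Fin d → ℝ) → List Bool → Prop
  | _, _, [] => True
  | .leaf _, _, _ :: _ => False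
  | .node f v l _, z, false :: p => z f ≤ v ∧ ReachesD l z p
  | .node f v _ r, z, true :: p => v < z f ∧ ReachesD r z p

/-- The `sym` annotation stored at the node of an annotated tree identified by path `p`
(`none` if no such node exists). -/
def ATree.symAt {d : ℕ} {Y : Type*} {σ : Type*} :
    ATree d Y σ → List Bool → Option σ
  | .leaf _ S, [] => some S
  | .node _ _ S _ _, [] => some S
  | .leaf _ _, _ :: _ => none
  | .node _ _ _ l _, false :: p => l.symAt p
  | .node _ _ _ _ r, true :: p => r.symAt p

/-- The minimum cost the attacker (with costs `c` and intervals `Iatk`) must pay to make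
the instance `x` traverse the node of `t` identified by path `p`. -/
noncomputable def minCost {d : ℕ} {Y : Type*} (c : Fin d → ℕ) (Iatk : Fin d → Set ℝ)
    (t : DTree d Y) (x : Fin d → ℝ) (p : List Bool) : ℕ :=
  sInf {k : ℕ | ∃ w ∈ Adv c Iatk k x, ReachesD t w p}

/-- The node of `t` identified by path `p` is well-annotated by the set `S` of symbolic
attacks: for every instance `x` and every adversarial manipulation `z ∈ A(x)` traversing
the node, `S` contains a symbolic attack `s` with `x ∈ s.pre`, `z ∈ s.post`, and `s.cost`
equal to the minimum cost to pay to make `x` traverse the node. -/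
def NodeWellAnnotated {d : ℕ} {Y : Type*} (c : Fin d → ℕ) (Iatk : Fin d → Set ℝ)
    (b : ℕ) (t : DTree d Y) (p : List Bool) (S : Set (SymAtk d)) : Prop :=
  ∀ x z, z ∈ Adv c Iatk b x → ReachesD t z p →
    ∃ s ∈ S, x ∈ box s.pre ∧ z ∈ box s.post ∧ s.cost = minCost c Iatk t x p


/-!
A node of a decision tree is reached exactly by the points of a box `B`, its region. From an
instance `x` the attacker must move every coordinate where `x` lies outside `B`; copying just those
coordinates from any manipulation `z ∈ A(x)` that reaches the node reaches it at that price, so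
the minimum cost is `∑ c g` over them. For each such pair `x`, `z`, `Annotate` stores an attack
with exactly this cost whose pre- and post-intervals coincide on the coordinates where `x` lies
inside `B`: this is what lets `RefineLeft` and `RefineRight` tell, at a node testing `f`, whether
`f` has already been attacked.
-/

open Set Function

section Soundness

variable {d : ℕ} {Y : Type*} {c : Fin d → ℕ} {Iatk : Fin d → Set ℝ} {b : ℕ}
  {δl δr : Fin d → ℝ} {B : Fin d → Set ℝ} {x z : Fin d → ℝ} {f : Fin d} {P : Set ℝ}

lemma mem_box_update_inter {w : Fin d → ℝ} :
    w ∈ box (update B f (B f ∩ P)) ↔ w ∈ box B ∧ w f ∈ P := by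
  constructor
  · intro h
    have hf : w f ∈ B f ∧ w f ∈ P := by simpa using h f
    refine ⟨fun g => ?_, hf.2⟩
    rcases eq_or_ne g f with rfl | hg
    · exact hf.1
    · simpa [hg] using h g
  · rintro ⟨hB, hP⟩ g
    rcases eq_or_ne g f with rfl | hg
    · simpa using ⟨hB g, hP⟩
    · simpa [hg] using hB g

noncomputable def outsideCoords (x : Fin d → ℝ) (B : Fin d → Set ℝ) : Finset (Fin d) :=
  {g | x g ∉ B g}

@[simp]
lemma mem_outsideCoords {g : Fin d} : g ∈ outsideCoords x B ↔ x g ∉ B g := by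
  simp [outsideCoords]

lemma outsideCoords_subset {F : Finset (Fin d)} (hz : z ∈ box B) (hF : ∀ g ∉ F, z g = x g) :
    outsideCoords x B ⊆ F := by
  intro g hg
  by_contra hgF
  exact mem_outsideCoords.1 hg (hF g hgF ▸ hz g)

lemma outsideCoords_update_inter (h : x f ∈ B f → x f ∈ P) :
    outsideCoords x (update B f (B f ∩ P)) = outsideCoords x B := by
  ext g
  rcases eq_or_ne g f with rfl | hg
  · simp only [mem_outsideCoords, update_self, mem_inter_iff]
    tauto
  · simp [hg]

lemma sum_outsideCoords_update_inter (hB : x f ∈ B f) (hP : x f ∉ P) :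
    ∑ g ∈ outsideCoords x (update B f (B f ∩ P)), c g =
      ∑ g ∈ outsideCoords x B, c g + c f := by
  have hf : f ∉ outsideCoords x B := by simpa using hB
  have : outsideCoords x (update B f (B f ∩ P)) = insert f (outsideCoords x B) := by
    ext g
    rcases eq_or_ne g f with rfl | hg
    · simp [hP]
    · simp [hg]
  rw [this, Finset.sum_insert hf, add_comm]

lemma sum_outsideCoords_le {k : ℕ} {w : Fin d → ℝ} (hw : w ∈ Adv c Iatk k x)
    (hwB : w ∈ box B) : ∑ g ∈ outsideCoords x B, c g ≤ k := by
  obtain ⟨F, -, hnF, hFk⟩ := hw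
  exact (Finset.sum_le_sum_of_subset (outsideCoords_subset hwB hnF)).trans hFk

lemma piecewise_outsideCoords_mem (hz : z ∈ Adv c Iatk b x) (hzB : z ∈ box B) :
    (outsideCoords x B).piecewise z x ∈
      Adv c Iatk (∑ g ∈ outsideCoords x B, c g) x ∩ box B := by
  obtain ⟨F, hF, hnF, -⟩ := hz
  refine ⟨⟨outsideCoords x B, fun g hg => ?_, fun g hg => ?_, le_rfl⟩, fun g => ?_⟩
  · rw [Finset.piecewise_eq_of_mem _ _ _ hg]
    exact hF g (outsideCoords_subset hzB hnF hg)
  · rw [Finset.piecewise_eq_of_notMem _ _ _ hg]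
  · by_cases hg : g ∈ outsideCoords x B
    · rw [Finset.piecewise_eq_of_mem _ _ _ hg]
      exact hzB g
    · rw [Finset.piecewise_eq_of_notMem _ _ _ hg]
      simpa using hg

lemma minCost_eq_sum_outsideCoords {t : DTree d Y} {p : List Bool}
    (hR : ∀ w, ReachesD t w p ↔ w ∈ box B) (hz : z ∈ Adv c Iatk b x) (hzB : z ∈ box B) :
    minCost c Iatk t x p = ∑ g ∈ outsideCoords x B, c g := by
  obtain ⟨hw, hwB⟩ := piecewise_outsideCoords_mem hz hzB
  refine le_antisymm (Nat.sInf_le ⟨_, hw, (hR _).2 hwB⟩)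
    (le_csInf ⟨_, _, hw, (hR _).2 hwB⟩ ?_)
  rintro k ⟨w, hwk, hwt⟩
  exact sum_outsideCoords_le hwk ((hR w).1 hwt)

structure SymAtk.Explains (c : Fin d → ℕ) (B : Fin d → Set ℝ) (x z : Fin d → ℝ)
    (s : SymAtk d) : Prop where
  mem_pre : x ∈ box s.pre
  mem_post : z ∈ box s.post
  post_subset : ∀ g, s.post g ⊆ B g
  pre_eq_post : ∀ g, x g ∈ B g → s.pre g = s.post g
  cost_eq : s.cost = ∑ g ∈ outsideCoords x B, c g

lemma SymAtk.Explains.update_inter {s : SymAtk d} (hs : s.Explains c B x z)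
    {A Q : Set ℝ} {k : ℕ} (hQP : Q ⊆ P) (hxA : x f ∈ A) (hzQ : z f ∈ Q)
    (hAQ : x f ∈ B f → x f ∈ P → s.pre f ∩ A = s.post f ∩ Q)
    (hk : k = ∑ g ∈ outsideCoords x (update B f (B f ∩ P)), c g) :
    SymAtk.Explains c (update B f (B f ∩ P)) x z
      ⟨update s.pre f (s.pre f ∩ A), update s.post f (s.post f ∩ Q), k⟩ where
  mem_pre := mem_box_update_inter.2 ⟨hs.mem_pre, hxA⟩
  mem_post := mem_box_update_inter.2 ⟨hs.mem_post, hzQ⟩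
  post_subset g := by
    rcases eq_or_ne g f with rfl | hg
    · simpa using inter_subset_inter (hs.post_subset g) hQP
    · simpa [hg] using hs.post_subset g
  pre_eq_post g hxg := by
    rcases eq_or_ne g f with rfl | hg
    · simp only [update_self] at hxg ⊢
      exact hAQ hxg.1 hxg.2
    · simp only [update_of_ne hg] at hxg ⊢
      exact hs.pre_eq_post g hxg
  cost_eq := hk

def WellAnnotatedOn (c : Fin d → ℕ) (Iatk : Fin d → Set ℝ) (b : ℕ) (B : Fin d → Set ℝ)
    (S : Set (SymAtk d)) : Prop :=
  ∀ x z, z ∈ Adv c Iatk b x → z ∈ box B → ∃ s ∈ S, s.Explains c B x z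

lemma WellAnnotatedOn.refineLeft {S : Set (SymAtk d)}
    (h : WellAnnotatedOn c (fun g => Icc (δl g) (δr g)) b B S) (f : Fin d) (v : ℝ) :
    WellAnnotatedOn c (fun g => Icc (δl g) (δr g)) b (update B f (B f ∩ Iic v))
      (⋃ s ∈ S, RefineLeft c δl δr b s f v) := by
  intro x z hz hzB'
  obtain ⟨hzB, hzv : z f ≤ v⟩ := mem_box_update_inter.1 hzB'
  obtain ⟨s, hsS, hs⟩ := h x z hz hzB
  have hpost : s.post f ∩ Iic v ≠ ∅ := nonempty_iff_ne_empty.1 ⟨z f, hs.mem_post f, hzv⟩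
  obtain ⟨F, hF, hnF, -⟩ := id hz
  by_cases hxB : x f ∈ B f
  · have hpp := hs.pre_eq_post f hxB
    by_cases hxv : x f ≤ v
    · refine ⟨_, mem_biUnion hsS ?_, hs.update_inter subset_rfl hxv hzv (fun _ _ => by rw [hpp])
        (hs.cost_eq.trans (by rw [outsideCoords_update_inter fun _ => hxv]))⟩
      rw [RefineLeft, if_pos hpost, if_pos hpp]
      exact Or.inl rfl
    · -- the attacker must pay for `f`, moving it left by `δ < 0`
      have hfF : f ∈ F := by
        by_contra hfF
        exact hxv (hnF f hfF ▸ hzv)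
      obtain ⟨δ, hδ, hzx⟩ := hF f hfF
      have hδl : δl f < 0 := by linarith [hδ.1]
      have hxI : x f ∈ Ioc v (v - δl f) := ⟨not_le.1 hxv, by linarith [hδ.1]⟩
      have hzI : z f ∈ Ioc (v + δl f) v := ⟨by linarith [hδ.1], hzv⟩
      have hcost : s.cost + c f = ∑ g ∈ outsideCoords x (update B f (B f ∩ Iic v)), c g := by
        rw [sum_outsideCoords_update_inter hxB hxv, hs.cost_eq]
      have hbudget : s.cost + c f ≤ b := hcost ▸ sum_outsideCoords_le hz hzB'
      have hpre : s.pre f ∩ Ioc v (v - δl f) ≠ ∅ :=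
        nonempty_iff_ne_empty.1 ⟨x f, hs.mem_pre f, hxI⟩
      refine ⟨_, mem_biUnion hsS ?_,
        hs.update_inter Ioc_subset_Iic_self hxI hzI (fun _ h => absurd h hxv) hcost⟩
      refine Or.inr ?_
      rw [if_pos ⟨hpp, hδl, hpre, hbudget⟩]
      rfl
  · -- `f` was attacked before, so only the attack interval bounds `x f`
    have hpp : s.pre f ≠ s.post f := fun hpp => hxB (hs.post_subset f (hpp ▸ hs.mem_pre f))
    obtain ⟨δ, hδ, hzx⟩ := hF f (outsideCoords_subset hzB hnF (mem_outsideCoords.2 hxB))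
    have hxI : x f ∈ Iic (v - min 0 (δl f)) := by
      simp only [mem_Iic]; linarith [min_le_right 0 (δl f), hδ.1]
    refine ⟨_, mem_biUnion hsS ?_, hs.update_inter subset_rfl hxI hzv (fun h => absurd h hxB)
      (hs.cost_eq.trans (by rw [outsideCoords_update_inter fun h => absurd h hxB]))⟩
    rw [RefineLeft, if_pos hpost, if_neg hpp]
    exact Or.inl rfl

lemma WellAnnotatedOn.refineRight {S : Set (SymAtk d)}
    (h : WellAnnotatedOn c (fun g => Icc (δl g) (δr g)) b B S) (f : Fin d) (v : ℝ) :
    WellAnnotatedOn c (fun g => Icc (δl g) (δr g)) b (update B f (B f ∩ Ioi v))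
      (⋃ s ∈ S, RefineRight c δl δr b s f v) := by
  intro x z hz hzB'
  obtain ⟨hzB, hzv⟩ := mem_box_update_inter.1 hzB'
  obtain ⟨s, hsS, hs⟩ := h x z hz hzB
  have hpost : s.post f ∩ Ioi v ≠ ∅ := nonempty_iff_ne_empty.1 ⟨z f, hs.mem_post f, hzv⟩
  obtain ⟨F, hF, hnF, -⟩ := id hz
  by_cases hxB : x f ∈ B f
  · have hpp := hs.pre_eq_post f hxB
    by_cases hxv : x f ∈ Ioi v
    · refine ⟨_, mem_biUnion hsS ?_, hs.update_inter subset_rfl hxv hzv (fun _ _ => by rw [hpp])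
        (hs.cost_eq.trans (by rw [outsideCoords_update_inter fun _ => hxv]))⟩
      rw [RefineRight, if_pos hpost, if_pos hpp]
      exact Or.inl rfl
    · have hfF : f ∈ F := by
        by_contra hfF
        exact hxv (hnF f hfF ▸ hzv)
      obtain ⟨δ, hδ, hzx⟩ := hF f hfF
      have hxfv : x f ≤ v := not_lt.1 hxv
      have hzfv : v < z f := hzv
      have hδr : δr f > 0 := by linarith [hδ.2]
      have hxI : x f ∈ Ioc (v - δr f) v := ⟨by linarith [hδ.2], hxfv⟩
      have hzI : z f ∈ Ioc v (v + δr f) := ⟨hzfv, by linarith [hδ.2]⟩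
      have hcost : s.cost + c f = ∑ g ∈ outsideCoords x (update B f (B f ∩ Ioi v)), c g := by
        rw [sum_outsideCoords_update_inter hxB hxv, hs.cost_eq]
      have hbudget : s.cost + c f ≤ b := hcost ▸ sum_outsideCoords_le hz hzB'
      have hpre : s.pre f ∩ Ioc (v - δr f) v ≠ ∅ :=
        nonempty_iff_ne_empty.1 ⟨x f, hs.mem_pre f, hxI⟩
      refine ⟨_, mem_biUnion hsS ?_,
        hs.update_inter Ioc_subset_Ioi_self hxI hzI (fun _ h => absurd h hxv) hcost⟩
      refine Or.inr ?_
      rw [if_pos ⟨hpp, hδr, hpre, hbudget⟩]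
      rfl
  · have hpp : s.pre f ≠ s.post f := fun hpp => hxB (hs.post_subset f (hpp ▸ hs.mem_pre f))
    obtain ⟨δ, hδ, hzx⟩ := hF f (outsideCoords_subset hzB hnF (mem_outsideCoords.2 hxB))
    have hxI : x f ∈ Ioi (v - max 0 (δr f)) := by
      simp only [mem_Ioi]; linarith [le_max_right 0 (δr f), hδ.2, mem_Ioi.1 hzv]
    refine ⟨_, mem_biUnion hsS ?_, hs.update_inter subset_rfl hxI hzv (fun h => absurd h hxB)
      (hs.cost_eq.trans (by rw [outsideCoords_update_inter fun h => absurd h hxB]))⟩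
    rw [RefineRight, if_pos hpost, if_neg hpp]
    exact Or.inl rfl

lemma reachesD_nil (t : DTree d Y) (w : Fin d → ℝ) : ReachesD t w [] := by
  cases t <;> trivial

lemma exists_region_of_symAt_annotate (t : DTree d Y) {B : Fin d → Set ℝ}
    {S S' : Set (SymAtk d)} {p : List Bool}
    (h : WellAnnotatedOn c (fun g => Icc (δl g) (δr g)) b B S)
    (hp : (Annotate c δl δr b t S).symAt p = some S') :
    ∃ R : Fin d → Set ℝ, (∀ w, w ∈ box R ↔ w ∈ box B ∧ ReachesD t w p) ∧
      WellAnnotatedOn c (fun g => Icc (δl g) (δr g)) b R S' := by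
  induction t generalizing B S p with
  | leaf y =>
    cases p with
    | nil =>
      cases Option.some.inj hp
      exact ⟨B, fun w => by simp [reachesD_nil], h⟩
    | cons _ _ => simp [Annotate, ATree.symAt] at hp
  | node f v l r ihl ihr =>
    rcases p with _ | ⟨_ | _, p⟩
    · cases Option.some.inj hp
      exact ⟨B, fun w => by simp [reachesD_nil], h⟩
    · obtain ⟨R, hR, hRS⟩ := ihl (h.refineLeft f v) hp
      refine ⟨R, fun w => ?_, hRS⟩
      rw [hR, mem_box_update_inter, ReachesD, mem_Iic, and_assoc]
    · obtain ⟨R, hR, hRS⟩ := ihr (h.refineRight f v) hp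
      refine ⟨R, fun w => ?_, hRS⟩
      rw [hR, mem_box_update_inter, ReachesD, mem_Ioi, and_assoc]

lemma wellAnnotatedOn_univ {t : DTree d Y} {S : Set (SymAtk d)}
    (hS : ∀ s ∈ S, s.cost = 0 → s.pre = s.post) (hroot : NodeWellAnnotated c Iatk b t [] S) :
    WellAnnotatedOn c Iatk b (fun _ => univ) S := by
  intro x z hz _
  obtain ⟨s, hsS, hxs, hzs, hcost⟩ := hroot x z hz (reachesD_nil t z)
  have hmin : minCost c Iatk t x [] = ∑ g ∈ outsideCoords x (fun _ => univ), c g :=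
    minCost_eq_sum_outsideCoords (by simp [reachesD_nil, box]) hz fun _ => mem_univ _
  have hpp := hS s hsS (by simp [hcost, hmin])
  exact ⟨s, hsS, hxs, hzs, fun _ => subset_univ _, fun g _ => congrFun hpp g, hcost.trans hmin⟩

end Soundness

theorem annotate_sound_general {d : ℕ} {Y : Type*}
    (c : Fin d → ℕ) (δl δr : Fin d → ℝ) (b : ℕ)
    (t : DTree d Y) (S : Set (SymAtk d))
    (hS : ∀ s ∈ S, s.cost = 0 → s.pre = s.post)
    (hroot : NodeWellAnnotated c (fun f => Set.Icc (δl f) (δr f)) b t [] S) :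
    ∀ (p : List Bool) (S' : Set (SymAtk d)),
      (Annotate c δl δr b t S).symAt p = some S' →
      NodeWellAnnotated c (fun f => Set.Icc (δl f) (δr f)) b t p S' := by
  intro p S' hp x z hz hreach
  obtain ⟨R, hR, hRS'⟩ := exists_region_of_symAt_annotate t (wellAnnotatedOn_univ hS hroot) hp
  have hreach_iff : ∀ w, ReachesD t w p ↔ w ∈ box R := fun w =>
    ((hR w).trans (and_iff_right fun _ => mem_univ _)).symm
  have hzR : z ∈ box R := (hreach_iff z).1 hreach
  obtain ⟨s, hs, hexp⟩ := hRS' x z hz hzR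
  exact ⟨s, hs, hexp.mem_pre, hexp.mem_post,
    hexp.cost_eq.trans (minCost_eq_sum_outsideCoords hreach_iff hz hzR).symm⟩

/-- Soundness of tree annotation (Lemma 1): if the root of `t` is well-annotated by `S`
(a set of symbolic attacks, i.e., `s.pre = s.post` whenever `s.cost = 0`), then
`Annotate t S` returns a well-annotated decision tree: every node of the resulting tree
is well-annotated by the set of symbolic attacks stored in its `sym` attribute. -/
theorem annotate_sound {d : ℕ} {Y : Type*} [Fintype Y]
    (c : Fin d → ℕ) (δl δr : Fin d → ℝ) (b : ℕ)
    (t : DTree d Y) (S : Set (SymAtk d))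
    (hS : ∀ s ∈ S, s.cost = 0 → s.pre = s.post)
    (hroot : NodeWellAnnotated c (fun f => Set.Icc (δl f) (δr f)) b t [] S) :
    ∀ (p : List Bool) (S' : Set (SymAtk d)),
      (Annotate c δl δr b t S).symAt p = some S' →
      NodeWellAnnotated c (fun f => Set.Icc (δl f) (δr f)) b t p S' :=
  annotate_sound_general c δl δr b t S hS hroot
end

section
/- Soundness of Tree Ensemble Analysis (Theorem 2): let T = {t_1,…,t_n} be an ensemble of decision trees with ensemble prediction T : ℝ^d → Y and hyper-rectangle prediction T(H) ⊆ Y. Assume: (H1) soundness of T(H): for every hyper-rectangle H, {y ∈ Y : ∃ x ∈ H, T(x) = y} ⊆ T(H); (H2) soundness of Split: for every symbolic attack s, if there exist x ∈ ℝ^d and z ∈ A(x) with x ∈ s.pre and z ∈ s.post, then there exists s' ∈ Split(s) with x ∈ s'.pre and z ∈ s'.post; (H3) each per-tree analysis Analyze(t_i) returns a set U_i of symbolic attacks such that for every x ∈ ℝ^d and z ∈ A(x) with t_i(z) ≠ t_i(x), there exists s ∈ U_i with x ∈ s.pre and z ∈ s.post; and (H4) T(x) is determined by the tuple of tree predictions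 (t_1(x),…,t_n(x)). Then, for any number of iterations of the ensemble analysis loop (i.e., under an arbitrary stopping condition), the call Analyze(T) returns a set of symbolic attacks U such that for every instance x ∈ ℝ^d and every adversarial manipulation z ∈ A(x) with T(z) ≠ T(x), there exists s ∈ U with x ∈ s.pre and z ∈ s.post. -/
open Classical

/-- One processing step of the ensemble analysis loop on the state `(C, E)`: a candidate
`s ∈ C` is picked; if `T(s.pre) = T(s.post) = {y}` then `s` is removed from `C`;
otherwise, if `T(s.pre) ∩ T(s.post) ≠ ∅` then `s` is replaced in `C` by `Split s`;
otherwise `s` is moved from `C` to `E`. -/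
def Step {d : ℕ} {Y : Type*} (TBox : (Fin d → Set ℝ) → Set Y)
    (Split : SymAtk d → Set (SymAtk d)) :
    Set (SymAtk d) × Set (SymAtk d) → Set (SymAtk d) × Set (SymAtk d) → Prop :=
  fun CE CE' => ∃ s ∈ CE.1,
    ((∃ y : Y, TBox s.pre = {y} ∧ TBox s.post = {y}) ∧
        CE' = (CE.1 \ {s}, CE.2)) ∨
    (¬(∃ y : Y, TBox s.pre = {y} ∧ TBox s.post = {y}) ∧
        (TBox s.pre ∩ TBox s.post).Nonempty ∧
        CE' = ((CE.1 \ {s}) ∪ Split s, CE.2)) ∨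
    (¬(∃ y : Y, TBox s.pre = {y} ∧ TBox s.post = {y}) ∧
        TBox s.pre ∩ TBox s.post = ∅ ∧
        CE' = (CE.1 \ {s}, CE.2 ∪ {s}))

/-!
The loop keeps the invariant that `C ∪ E` covers a fixed successful attack `(x, z)`. Initially
some tree changes its prediction from `x` to `z`, since otherwise the ensemble would not, so the
per-tree analysis of that tree covers `(x, z)`. A loop step only touches one candidate `s`: it
cannot be the covering one if it is pruned as safe, because soundness of `T(H)` would force
`T x = T z`; if it is split, one of its pieces covers `(x, z)`; if it is moved to `E`, it stays.
-/

def Covers {d : ℕ} (S : Set (SymAtk d)) (x z : Fin d → ℝ) : Prop :=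
  ∃ s ∈ S, x ∈ box s.pre ∧ z ∈ box s.post

section Covers

variable {d : ℕ} {S S' : Set (SymAtk d)} {x z : Fin d → ℝ}

theorem Covers.mono (h : Covers S x z) (hSS' : S ⊆ S') : Covers S' x z := by
  obtain ⟨s, hs, hx, hz⟩ := h
  exact ⟨s, hSS' hs, hx, hz⟩

theorem Covers.diff_singleton_or (h : Covers S x z) (s₀ : SymAtk d) :
    Covers (S \ {s₀}) x z ∨ x ∈ box s₀.pre ∧ z ∈ box s₀.post := by
  obtain ⟨s, hs, hx, hz⟩ := h
  by_cases hss₀ : s = s₀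
  · exact Or.inr (hss₀ ▸ ⟨hx, hz⟩)
  · exact Or.inl ⟨s, ⟨hs, hss₀⟩, hx, hz⟩

end Covers

section Analysis

variable {d : ℕ} {Y : Type*} {T : (Fin d → ℝ) → Y} {TBox : (Fin d → Set ℝ) → Set Y}
  {x z : Fin d → ℝ}

theorem eq_of_tBox_eq_singleton
    (H1 : ∀ H : Fin d → Set ℝ, {y : Y | ∃ x ∈ box H, T x = y} ⊆ TBox H)
    {s : SymAtk d} {y : Y} (hpre : TBox s.pre = {y}) (hpost : TBox s.post = {y})
    (hx : x ∈ box s.pre) (hz : z ∈ box s.post) : T z = T x := by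
  have hTx : T x ∈ TBox s.pre := H1 _ ⟨x, hx, rfl⟩
  have hTz : T z ∈ TBox s.post := H1 _ ⟨z, hz, rfl⟩
  rw [hpre] at hTx
  rw [hpost] at hTz
  exact hTz.trans hTx.symm

theorem covers_iUnion_of_apply_ne {n : ℕ} {A : (Fin d → ℝ) → Set (Fin d → ℝ)}
    {t : Fin n → DTree d Y} {U : Fin n → Set (SymAtk d)}
    (H3 : ∀ (i : Fin n) (x : Fin d → ℝ), ∀ z ∈ A x,
      (t i).eval z ≠ (t i).eval x →
      ∃ s ∈ U i, x ∈ box s.pre ∧ z ∈ box s.post)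
    (H4 : ∀ x z : Fin d → ℝ, (∀ i, (t i).eval x = (t i).eval z) → T x = T z)
    (hz : z ∈ A x) (hne : T z ≠ T x) : Covers (⋃ i, U i) x z := by
  obtain ⟨i, hi⟩ : ∃ i, (t i).eval z ≠ (t i).eval x := by
    by_contra! h
    exact hne (H4 z x h)
  obtain ⟨s, hs, hsx, hsz⟩ := H3 i x z hz hi
  exact ⟨s, Set.mem_iUnion_of_mem i hs, hsx, hsz⟩

theorem Step.covers {Split : SymAtk d → Set (SymAtk d)}
    (H1 : ∀ H : Fin d → Set ℝ, {y : Y | ∃ x ∈ box H, T x = y} ⊆ TBox H)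
    (hsplit : ∀ s : SymAtk d, x ∈ box s.pre → z ∈ box s.post → Covers (Split s) x z)
    (hne : T z ≠ T x) {CE CE' : Set (SymAtk d) × Set (SymAtk d)}
    (hstep : Step TBox Split CE CE') (hcov : Covers (CE.1 ∪ CE.2) x z) :
    Covers (CE'.1 ∪ CE'.2) x z := by
  obtain ⟨C, E⟩ := CE
  obtain ⟨s₀, -, hcase⟩ := hstep
  have hrest : (C ∪ E) \ {s₀} ⊆ (C \ {s₀}) ∪ E := fun s ⟨hs, hss₀⟩ =>
    hs.imp (fun hC => ⟨hC, hss₀⟩) id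
  rcases hcase with ⟨⟨y, hpre, hpost⟩, rfl⟩ | ⟨-, -, rfl⟩ | ⟨-, -, rfl⟩
  · rcases hcov.diff_singleton_or s₀ with hcov' | ⟨hx, hz⟩
    · exact hcov'.mono hrest
    · exact absurd (eq_of_tBox_eq_singleton H1 hpre hpost hx hz) hne
  · rcases hcov.diff_singleton_or s₀ with hcov' | ⟨hx, hz⟩
    · exact hcov'.mono (hrest.trans (Set.union_subset_union_left E Set.subset_union_left))
    · exact (hsplit s₀ hx hz).mono (Set.subset_union_right.trans Set.subset_union_left)
  · rcases hcov.diff_singleton_or s₀ with hcov' | ⟨hx, hz⟩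
    · exact hcov'.mono (hrest.trans (Set.union_subset_union_right _ Set.subset_union_left))
    · exact ⟨s₀, Or.inr (Or.inr rfl), hx, hz⟩

end Analysis

theorem ensemble_analysis_sound_general {d n : ℕ} {Y : Type*}
    (A : (Fin d → ℝ) → Set (Fin d → ℝ))
    (t : Fin n → DTree d Y) (T : (Fin d → ℝ) → Y)
    (TBox : (Fin d → Set ℝ) → Set Y) (Split : SymAtk d → Set (SymAtk d))
    (U : Fin n → Set (SymAtk d))
    -- (H1) soundness of the hyper-rectangle prediction T(H)
    (H1 : ∀ H : Fin d → Set ℝ, {y : Y | ∃ x ∈ box H, T x = y} ⊆ TBox H)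
    -- (H2) soundness of the splitting procedure
    (H2 : ∀ (s : SymAtk d) (x : Fin d → ℝ), ∀ z ∈ A x,
      x ∈ box s.pre → z ∈ box s.post →
      ∃ s' ∈ Split s, x ∈ box s'.pre ∧ z ∈ box s'.post)
    -- (H3) soundness of the per-tree analyses
    (H3 : ∀ (i : Fin n) (x : Fin d → ℝ), ∀ z ∈ A x,
      (t i).eval z ≠ (t i).eval x →
      ∃ s ∈ U i, x ∈ box s.pre ∧ z ∈ box s.post)
    -- (H4) the ensemble prediction is determined by the tuple of tree predictions
    (H4 : ∀ x z : Fin d → ℝ, (∀ i, (t i).eval x = (t i).eval z) → T x = T z)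
    (C E : Set (SymAtk d))
    (hreach : Relation.ReflTransGen (Step TBox Split) (⋃ i, U i, ∅) (C, E)) :
    ∀ (x : Fin d → ℝ), ∀ z ∈ A x, T z ≠ T x →
      ∃ s ∈ C ∪ E, x ∈ box s.pre ∧ z ∈ box s.post := by
  intro x z hz hne
  have hinit : Covers ((⋃ i, U i) ∪ ∅) x z :=
    (covers_iUnion_of_apply_ne H3 H4 hz hne).mono Set.subset_union_left
  have hinv : ∀ CE, Relation.ReflTransGen (Step TBox Split) (⋃ i, U i, ∅) CE →
      Covers (CE.1 ∪ CE.2) x z := fun _ h =>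
    h.rec hinit fun _ hstep hcov =>
      Step.covers H1 (fun s hx hz' => H2 s x z hz hx hz') hne hstep hcov
  exact hinv (C, E) hreach

/-- Soundness of tree ensemble analysis (Theorem 2): starting from the union of sound
per-tree analyses and running the ensemble analysis loop for any number of iterations
(i.e., under an arbitrary stopping condition), the returned set `C ∪ E` covers all
successful evasion attacks: for every `x` and `z ∈ A(x)` with `T(z) ≠ T(x)` there is
`s ∈ C ∪ E` with `x ∈ s.pre` and `z ∈ s.post`. -/
theorem ensemble_analysis_sound {d n : ℕ} {Y : Type*} [Fintype Y]
    (A : (Fin d → ℝ) → Set (Fin d → ℝ))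
    (t : Fin n → DTree d Y) (T : (Fin d → ℝ) → Y)
    (TBox : (Fin d → Set ℝ) → Set Y) (Split : SymAtk d → Set (SymAtk d))
    (U : Fin n → Set (SymAtk d))
    -- (H1) soundness of the hyper-rectangle prediction T(H)
    (H1 : ∀ H : Fin d → Set ℝ, {y : Y | ∃ x ∈ box H, T x = y} ⊆ TBox H)
    -- (H2) soundness of the splitting procedure
    (H2 : ∀ (s : SymAtk d) (x : Fin d → ℝ), ∀ z ∈ A x,
      x ∈ box s.pre → z ∈ box s.post →
      ∃ s' ∈ Split s, x ∈ box s'.pre ∧ z ∈ box s'.post)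
    -- (H3) soundness of the per-tree analyses
    (H3 : ∀ (i : Fin n) (x : Fin d → ℝ), ∀ z ∈ A x,
      (t i).eval z ≠ (t i).eval x →
      ∃ s ∈ U i, x ∈ box s.pre ∧ z ∈ box s.post)
    -- (H4) the ensemble prediction is determined by the tuple of tree predictions
    (H4 : ∀ x z : Fin d → ℝ, (∀ i, (t i).eval x = (t i).eval z) → T x = T z)
    (C E : Set (SymAtk d))
    (hreach : Relation.ReflTransGen (Step TBox Split) (⋃ i, U i, ∅) (C, E)) :
    ∀ (x : Fin d → ℝ), ∀ z ∈ A x, T z ≠ T x →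
      ∃ s ∈ C ∪ E, x ∈ box s.pre ∧ z ∈ box s.post :=
  ensemble_analysis_sound_general A t T TBox Split U H1 H2 H3 H4 C E hreach
end

section
/- Soundness of the implemented splitting procedure: assume 0 ∈ I^atk_g for every feature g. Let s be a symbolic attack, let f be a feature index and v ∈ ℝ a threshold with I^atk_f = [δ_l, δ_r], and let Split(s) be the set of symbolic attacks obtained by partitioning the f-th interval of s.pre at the thresholds v + δ_l, v, v + δ_r into at most four consecutive subintervals, where each resulting symbolic attack s' has s'.pre equal to s.pre with its f-th component replaced by one such subinterval, s'.post = s.post ∩ (s'.pre + ⟨I^atk_1,…,I^atk_d⟩), and s'.cost = s.cost. Then Split is sound: for every x ∈ ℝ^d and every z ∈ A(x), if x ∈ s.pre and z ∈ s.post, then there exists s' ∈ Split(s) with x ∈ s'.pre and z ∈ s'.post. -/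
open Pointwise

/-- The implemented splitting procedure: the `f`-th interval of `s.pre` is partitioned at
the thresholds `v + δl f`, `v`, `v + δr f` into at most four consecutive subintervals;
each resulting symbolic attack `s'` has `s'.pre` equal to `s.pre` with its `f`-th
component replaced by one such subinterval, post-image
`s'.post = s.post ∩ (s'.pre + ⟨Iatk 1,…,Iatk d⟩)` (componentwise interval sums) and the
same cost as `s`. -/
def SplitImpl {d : ℕ} (δl δr : Fin d → ℝ) (s : SymAtk d) (f : Fin d) (v : ℝ) :
    Set (SymAtk d) :=
  {s' | ∃ J ∈ ({s.pre f ∩ Set.Iic (v + δl f),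
                s.pre f ∩ Set.Ioc (v + δl f) v,
                s.pre f ∩ Set.Ioc v (v + δr f),
                s.pre f ∩ Set.Ioi (v + δr f)} : Set (Set ℝ)),
    s'.pre = Function.update s.pre f J ∧
    (∀ i, s'.post i = s.post i ∩ (s'.pre i + Set.Icc (δl i) (δr i))) ∧
    s'.cost = s.cost}

/-!
The split point of `x f` decides which of the four subintervals to take; since the four pieces
cover `s.pre f`, `x` stays in the refined pre-image. Every adversarial `z ∈ A(x)` differs from `x`
coordinatewise by a perturbation in `I^atk` (untouched features use `0 ∈ I^atk`), so
`z ∈ s'.pre + I^atk` as soon as `x ∈ s'.pre`.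
-/

open Set

lemma exists_mem_split_pieces {S : Set ℝ} {a : ℝ} (p q r : ℝ) (ha : a ∈ S) :
    ∃ J ∈ ({S ∩ Iic p, S ∩ Ioc p q, S ∩ Ioc q r, S ∩ Ioi r} : Set (Set ℝ)), a ∈ J := by
  rcases le_or_gt a p with hp | hp
  · exact ⟨S ∩ Iic p, by simp, ha, hp⟩
  rcases le_or_gt a q with hq | hq
  · exact ⟨S ∩ Ioc p q, by simp, ha, hp, hq⟩
  rcases le_or_gt a r with hr | hr
  · exact ⟨S ∩ Ioc q r, by simp, ha, hq, hr⟩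
  · exact ⟨S ∩ Ioi r, by simp, ha, hr⟩

lemma mem_box_update {d : ℕ} {H : Fin d → Set ℝ} {x : Fin d → ℝ} {f : Fin d} {J : Set ℝ}
    (hx : x ∈ box H) (hJ : x f ∈ J) : x ∈ box (Function.update H f J) := by
  intro i
  rcases eq_or_ne i f with rfl | hi
  · simpa using hJ
  · simpa [Function.update_of_ne hi] using hx i

lemma Adv.exists_perturbation {d : ℕ} {c : Fin d → ℕ} {Iatk : Fin d → Set ℝ} {b : ℕ}
    {x z : Fin d → ℝ} (h0 : ∀ i, (0 : ℝ) ∈ Iatk i) (hz : z ∈ Adv c Iatk b x) (i : Fin d) :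
    ∃ δ ∈ Iatk i, z i = x i + δ := by
  obtain ⟨F, hF, hnF, -⟩ := hz
  by_cases hi : i ∈ F
  · exact hF i hi
  · exact ⟨0, h0 i, by simp [hnF i hi]⟩

lemma mem_box_inter_add {d : ℕ} {P Q I : Fin d → Set ℝ} {x z : Fin d → ℝ}
    (hx : x ∈ box P) (hz : z ∈ box Q) (hδ : ∀ i, ∃ δ ∈ I i, z i = x i + δ) :
    z ∈ box fun i => Q i ∩ (P i + I i) := by
  intro i
  obtain ⟨δ, hδI, hzi⟩ := hδ i
  exact ⟨hz i, hzi ▸ add_mem_add (hx i) hδI⟩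

/-- Soundness of the implemented splitting procedure: assuming `0 ∈ Iatk g = [δl g, δr g]`
for every feature `g`, for every `x` and every `z ∈ A(x)`, if `x ∈ s.pre` and
`z ∈ s.post` then some `s' ∈ Split(s)` satisfies `x ∈ s'.pre` and `z ∈ s'.post`. -/
theorem splitImpl_sound {d : ℕ} (c : Fin d → ℕ) (δl δr : Fin d → ℝ) (b : ℕ)
    (h0 : ∀ g, (0 : ℝ) ∈ Set.Icc (δl g) (δr g))
    (s : SymAtk d) (f : Fin d) (v : ℝ) :
    ∀ (x : Fin d → ℝ), ∀ z ∈ Adv c (fun g => Set.Icc (δl g) (δr g)) b x,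
      x ∈ box s.pre → z ∈ box s.post →
      ∃ s' ∈ SplitImpl δl δr s f v, x ∈ box s'.pre ∧ z ∈ box s'.post := by
  intro x z hz hx hzpost
  obtain ⟨J, hJ, hxJ⟩ := exists_mem_split_pieces (v + δl f) v (v + δr f) (hx f)
  have hxpre := mem_box_update hx hxJ
  refine ⟨⟨Function.update s.pre f J,
      fun i => s.post i ∩ (Function.update s.pre f J i + Icc (δl i) (δr i)), s.cost⟩,
    ⟨J, hJ, rfl, fun _ => rfl, rfl⟩, hxpre, ?_⟩
  exact mem_box_inter_add hxpre hzpost (Adv.exists_perturbation h0 hz)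
end
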